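/- Let P = {p_1 < p_2 < ... < p_n} be points on a line, and let T be a minimum-weight sink tree rooted at p_x (x ∈ {i,j}) in the complete directed graph on P_{[i,j]} with weights w as above. Then for any two distinct edges (p_k, p_l) and (p_{k'}, p_{l'}) of T: if k < l' < l then k < k' < l. -/

import Mathlib

/-!
Exchange argument. Re-hanging a vertex `a ≠ x` below a vertex `b` that is not one of its
descendants yields another sink tree, whose weight differs from the old one only by
`w(a, b) - w(a, par a)`; and `w(a, ·)` is monotone in the distance to `p_a`. So in a minimum
tree the parent of `a` is at least as close to `p_a` as every non-descendant `b`.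

Now let `k < par k' < par k`, and suppose `k' ∉ (k, par k)`. If `k` is not an ancestor of
`par k'`, then `par k'` is a non-descendant of `k` strictly closer than `par k`. Otherwise `k`
is a descendant of `k'`, hence `k'` is not a descendant of `k`, and either `k' < k`, so that `k`
is closer to `k'` than `par k'`, or `par k < k'`, so that `par k` is.
-/

/-- Edge weight on the line: `w(p_a, p_b)` computed with respect to the point set
`P_{[lo,hi]} = {p_lo, …, p_hi}`. -/
noncomputable def lineWeight (p : ℕ → ℝ) (lo hi a b : ℕ) : ℕ :=
  ((Finset.Icc lo hi).filter (fun z => z ≠ a ∧ |p a - p z| ≤ |p a - p b|)).card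

/-- `par` encodes a spanning sink tree rooted at `p_x` on the vertex set `P_{[i,j]}`. -/
def IsSinkTreeOn (i j x : ℕ) (par : ℕ → ℕ) : Prop :=
  par x = x ∧ (∀ k ∈ Finset.Icc i j, k ≠ x → par k ∈ Finset.Icc i j ∧ par k ≠ k) ∧
    ∀ k ∈ Finset.Icc i j, ∃ m : ℕ, par^[m] k = x

/-- Total weight of the sink tree encoded by `par` on vertex set `P_{[a,b]}`, with edge
weights computed with respect to the ambient point set `P_{[lo,hi]}`. -/
noncomputable def sinkTreeWeight (p : ℕ → ℝ) (lo hi a b x : ℕ) (par : ℕ → ℕ) : ℕ :=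
  ∑ k ∈ (Finset.Icc a b).erase x, lineWeight p lo hi k (par k)

theorem Function.IsPeriodicPt.eq_of_iterate_eq_isFixedPt {α : Type*} {f : α → α} {a x : α}
    {n m : ℕ} (ha : Function.IsPeriodicPt f n a) (hn : 0 < n) (hx : Function.IsFixedPt f x)
    (hm : f^[m] a = x) : a = x := by
  have hle : m ≤ n * m := Nat.le_mul_of_pos_left m hn
  calc a = f^[n * m] a := ((ha.mul_const m).eq).symm
    _ = f^[n * m - m] (f^[m] a) := by rw [← Function.iterate_add_apply, Nat.sub_add_cancel hle]
    _ = x := by rw [hm, Function.iterate_fixed hx]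

theorem Function.iterate_update_of_forall_iterate_ne {α : Type*} [DecidableEq α] {f : α → α}
    {a b v : α} (hv : ∀ t, f^[t] v ≠ a) (m : ℕ) :
    (Function.update f a b)^[m] v = f^[m] v := by
  induction m generalizing v with
  | zero => rfl
  | succ m ih =>
    rw [Function.iterate_succ_apply, Function.iterate_succ_apply,
      Function.update_of_ne (show v ≠ a from hv 0)]
    exact ih fun t => by simpa only [Function.iterate_succ_apply] using hv (t + 1)

theorem StrictMono.abs_sub_lt_abs_sub_of_lt_of_lt {α : Type*} [Preorder α] {p : α → ℝ}
    (hp : StrictMono p) {a u v : α} (hau : a < u) (huv : u < v) :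
    |p a - p u| < |p a - p v| := by
  have := hp hau
  have := hp huv
  rw [abs_sub_comm, abs_of_pos (by linarith), abs_sub_comm, abs_of_pos (by linarith)]
  linarith

theorem StrictMono.abs_sub_lt_abs_sub_of_gt_of_gt {α : Type*} [Preorder α] {p : α → ℝ}
    (hp : StrictMono p) {a u v : α} (hvu : v < u) (hua : u < a) :
    |p a - p u| < |p a - p v| := by
  have := hp hvu
  have := hp hua
  rw [abs_of_pos (by linarith), abs_of_pos (by linarith)]
  linarith

theorem lineWeight_lt_of_abs_sub_lt {p : ℕ → ℝ} {lo hi a b c : ℕ} (hc : c ∈ Finset.Icc lo hi)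
    (hca : c ≠ a) (h : |p a - p b| < |p a - p c|) :
    lineWeight p lo hi a b < lineWeight p lo hi a c := by
  refine Finset.card_lt_card ((Finset.ssubset_iff_of_subset ?_).2 ⟨c, ?_, ?_⟩)
  · exact Finset.monotone_filter_right _ fun _ _ ⟨hza, hz⟩ => ⟨hza, hz.trans h.le⟩
  · exact Finset.mem_filter.2 ⟨hc, hca, le_rfl⟩
  · exact fun hmem => (Finset.mem_filter.1 hmem).2.2.not_gt h

theorem sinkTreeWeight_update_add (p : ℕ → ℝ) {lo hi a b x v : ℕ} (par : ℕ → ℕ) (w : ℕ)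
    (hv : v ∈ Finset.Icc a b) (hvx : v ≠ x) :
    sinkTreeWeight p lo hi a b x (Function.update par v w) + lineWeight p lo hi v (par v) =
      sinkTreeWeight p lo hi a b x par + lineWeight p lo hi v w := by
  have hmem : v ∈ (Finset.Icc a b).erase x := Finset.mem_erase.2 ⟨hvx, hv⟩
  unfold sinkTreeWeight
  simp only [Function.apply_update (fun k l => lineWeight p lo hi k l)]
  rw [Finset.sum_update_of_mem hmem, ← Finset.add_sum_erase _ _ hmem, Finset.sdiff_singleton_eq_erase]
  ring

namespace IsSinkTreeOn

variable {i j x : ℕ} {par : ℕ → ℕ}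

theorem iterate_ne_of_iterate_par_eq (hT : IsSinkTreeOn i j x par) {a b t : ℕ}
    (ha : a ∈ Finset.Icc i j) (hax : a ≠ x) (hab : par^[t] (par a) = b) (s : ℕ) :
    par^[s] b ≠ a := by
  intro hba
  have hcyc : Function.IsPeriodicPt par (s + (t + 1)) a := by
    rw [Function.IsPeriodicPt, Function.IsFixedPt, Function.iterate_add_apply,
      Function.iterate_succ_apply, hab, hba]
  obtain ⟨m, hm⟩ := hT.2.2 a ha
  exact hax (hcyc.eq_of_iterate_eq_isFixedPt (by omega) hT.1 hm)

theorem update (hT : IsSinkTreeOn i j x par) {a b : ℕ} (hax : a ≠ x) (hb : b ∈ Finset.Icc i j)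
    (hdesc : ∀ t, par^[t] b ≠ a) : IsSinkTreeOn i j x (Function.update par a b) := by
  obtain ⟨hroot, hparent, hreach⟩ := hT
  refine ⟨by rwa [Function.update_of_ne (Ne.symm hax)], fun v hv hvx => ?_, fun v hv => ?_⟩
  · by_cases hva : v = a
    · subst hva
      rw [Function.update_self]
      exact ⟨hb, hdesc 0⟩
    · rw [Function.update_of_ne hva]
      exact hparent v hv hvx
  · obtain ⟨m, hm⟩ := hreach v hv
    induction m generalizing v with
    | zero => exact ⟨0, hm⟩
    | succ m ih =>
      by_cases hva : v = a
      · subst hva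
        obtain ⟨mb, hmb⟩ := hreach b hb
        refine ⟨mb + 1, ?_⟩
        rw [Function.iterate_succ_apply, Function.update_self,
          Function.iterate_update_of_forall_iterate_ne hdesc, hmb]
      · have hpv : par v ∈ Finset.Icc i j := by
          by_cases hvx : v = x
          · rwa [hvx, hroot, ← hvx]
          · exact (hparent v hv hvx).1
        obtain ⟨m', hm'⟩ := ih (par v) hpv hm
        exact ⟨m' + 1, by rw [Function.iterate_succ_apply, Function.update_of_ne hva, hm']⟩

theorem abs_sub_par_le_of_minimal {p : ℕ → ℝ} (hT : IsSinkTreeOn i j x par)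
    (hmin : ∀ par' : ℕ → ℕ, IsSinkTreeOn i j x par' →
      sinkTreeWeight p i j i j x par ≤ sinkTreeWeight p i j i j x par')
    {a b : ℕ} (ha : a ∈ Finset.Icc i j) (hax : a ≠ x) (hb : b ∈ Finset.Icc i j)
    (hdesc : ∀ t, par^[t] b ≠ a) : |p a - p (par a)| ≤ |p a - p b| := by
  by_contra! hcloser
  obtain ⟨hpa, hpaa⟩ := hT.2.1 a ha hax
  have hlt := lineWeight_lt_of_abs_sub_lt hpa hpaa hcloser
  have hle := hmin _ (hT.update hax hb hdesc)
  have heq := sinkTreeWeight_update_add p par b ha hax (lo := i) (hi := j)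
  omega

end IsSinkTreeOn

theorem minWeight_sinkTree_noncrossing_ii_general
    (p : ℕ → ℝ) (hp : StrictMono p) (i j x : ℕ)
    (par : ℕ → ℕ) (hT : IsSinkTreeOn i j x par)
    (hmin : ∀ par' : ℕ → ℕ, IsSinkTreeOn i j x par' →
      sinkTreeWeight p i j i j x par ≤ sinkTreeWeight p i j i j x par')
    (k k' : ℕ) (hk : k ∈ Finset.Icc i j) (hk' : k' ∈ Finset.Icc i j)
    (hkx : k ≠ x) (hk'x : k' ≠ x) (hne : k ≠ k')
    (h1 : k < par k') (h2 : par k' < par k) :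
    k < k' ∧ k' < par k := by
  have hl := (hT.2.1 k hk hkx).1
  have hl' := (hT.2.1 k' hk' hk'x).1
  by_contra hcross
  by_cases hanc : ∃ t, par^[t] (par k') = k
  · obtain ⟨t, ht⟩ := hanc
    have hdesc : ∀ s, par^[s] k ≠ k' := hT.iterate_ne_of_iterate_par_eq hk' hk'x ht
    rcases lt_or_gt_of_ne hne with hkk' | hk'k
    · have hlk' : par k < k' := lt_of_le_of_ne (by omega) (hdesc 1)
      have hdesc' : ∀ s, par^[s] (par k) ≠ k' := fun s => by
        simpa only [Function.iterate_succ_apply] using hdesc (s + 1)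
      exact (hT.abs_sub_par_le_of_minimal hmin hk' hk'x hl hdesc').not_gt
        (hp.abs_sub_lt_abs_sub_of_gt_of_gt h2 hlk')
    · exact (hT.abs_sub_par_le_of_minimal hmin hk' hk'x hk hdesc).not_gt
        (hp.abs_sub_lt_abs_sub_of_lt_of_lt hk'k h1)
  · push Not at hanc
    exact (hT.abs_sub_par_le_of_minimal hmin hk hkx hl' hanc).not_gt
      (hp.abs_sub_lt_abs_sub_of_lt_of_lt h1 h2)

/-- non-crossing property (ii) of a minimum-weight sink tree on points on a
line: for distinct edges `(p_k, p_l)` and `(p_{k'}, p_{l'})` of the tree (so `l = par k`,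
`l' = par k'`), if `k < l' < l` then `k < k' < l`. -/
theorem minWeight_sinkTree_noncrossing_ii
    (p : ℕ → ℝ) (hp : StrictMono p) (i j x : ℕ) (hij : i ≤ j) (hx : x = i ∨ x = j)
    (par : ℕ → ℕ) (hT : IsSinkTreeOn i j x par)
    (hmin : ∀ par' : ℕ → ℕ, IsSinkTreeOn i j x par' →
      sinkTreeWeight p i j i j x par ≤ sinkTreeWeight p i j i j x par')
    (k k' : ℕ) (hk : k ∈ Finset.Icc i j) (hk' : k' ∈ Finset.Icc i j)
    (hkx : k ≠ x) (hk'x : k' ≠ x) (hne : k ≠ k')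
    (h1 : k < par k') (h2 : par k' < par k) :
    k < k' ∧ k' < par k :=
  minWeight_sinkTree_noncrossing_ii_general p hp i j x par hT hmin k k' hk hk' hkx hk'x hne h1 h2
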